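/- Two-term recursion for the complementary kernels (equation (3.12)): for every α ∈ (0,1), every partition 0 = t_0 < ⋯ < t_N = T, and every 2 ≤ n ≤ N, one has P^{n,n−1}_α = P^{n,n}_α · (1 − K^{n,n−1}_{1−α}/K^{n,n}_{1−α}) / μ_n^α, where μ_n = Δt_n/Δt_{n−1}. -/

import Mathlib

open Finset

/-- The kernel `k_β(s) = s^(β-1)/Γ(β)`. -/
noncomputable def kker (β s : ℝ) : ℝ := s ^ (β - 1) / Real.Gamma β

/-- The discrete L1 kernels `K^{n,j}_{1-α}`. -/
noncomputable def Kd (α : ℝ) (t : ℕ → ℝ) (n j : ℕ) : ℝ :=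
  (kker (2 - α) (t n - t (j - 1)) - kker (2 - α) (t n - t j)) / (t j - t (j - 1))

/-- The complementary discrete kernels `P^{n,i}_α`, defined by downward recursion. -/
noncomputable def Pd (α : ℝ) (t : ℕ → ℝ) (n i : ℕ) : ℝ :=
  if i = n then 1 / Kd α t n n
  else (1 / Kd α t i i) *
    ∑ j ∈ (Finset.Ioc i n).attach,
      Pd α t n j.1 * (Kd α t j.1 (i + 1) - Kd α t j.1 i)
termination_by n - i
decreasing_by
  have h := Finset.mem_Ioc.mp j.2
  omega

/-! The complementary kernels on the last two levels only involve the diagonal kernel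
`K^{n,n} = Δt_n^{-α}/Γ(2-α)` (since `k_{2-α}(0) = 0`) and `K^{n,n-1}`, so (3.12) is
the recursion for `P^{n,n-1}` rewritten with `K^{n,n}/K^{n-1,n-1} = μ_n^{-α}`. -/

theorem Kd_self {α : ℝ} (hα : α ≠ 1) (t : ℕ → ℝ) (m : ℕ) (hm : t (m + 1) - t m ≠ 0) :
    Kd α t (m + 1) (m + 1) = (t (m + 1) - t m) ^ (-α) / Real.Gamma (2 - α) := by
  have hexp : (2 : ℝ) - α - 1 = -α + 1 := by ring
  rw [Kd, kker, kker, Nat.add_sub_cancel, sub_self,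
    Real.zero_rpow (by rw [hexp]; contrapose! hα; linarith), hexp, Real.rpow_add_one hm]
  field_simp
  ring

theorem Pd_self (α : ℝ) (t : ℕ → ℝ) (n : ℕ) : Pd α t n n = 1 / Kd α t n n := by
  rw [Pd, if_pos rfl]

theorem Pd_succ_self (α : ℝ) (t : ℕ → ℝ) (m : ℕ) :
    Pd α t (m + 1) m =
      (Kd α t (m + 1) (m + 1) - Kd α t (m + 1) m) / Kd α t m m * Pd α t (m + 1) (m + 1) := by
  rw [Pd, if_neg (Nat.lt_succ_self m).ne, sum_attach (Ioc m (m + 1))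
      (fun j => Pd α t (m + 1) j * (Kd α t j (m + 1) - Kd α t j m)),
    Nat.Ioc_succ_singleton, sum_singleton]
  ring

theorem complementary_kernel_two_term_recursion_general
    (α : ℝ) (N : ℕ) (t : ℕ → ℝ)
    (hα1 : α < 1)
    (hmono : ∀ j, j < N → t j < t (j + 1)) :
    ∀ n, 2 ≤ n → n ≤ N →
      Pd α t n (n - 1)
        = Pd α t n n * (1 - Kd α t n (n - 1) / Kd α t n n) /
            ((t n - t (n - 1)) / (t (n - 1) - t (n - 2))) ^ α := by
  rintro n hn hnN
  obtain ⟨m, rfl⟩ : ∃ m, n = m + 2 := ⟨n - 2, by omega⟩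
  simp only [Nat.add_sub_cancel, Nat.add_succ_sub_one]
  have hΔ₁ : 0 < t (m + 1) - t m := sub_pos.2 (hmono m (by omega))
  have hΔ₂ : 0 < t (m + 2) - t (m + 1) := sub_pos.2 (hmono (m + 1) (by omega))
  have hΓ : 0 < Real.Gamma (2 - α) := Real.Gamma_pos_of_pos (by linarith)
  rw [Pd_succ_self, Pd_self, Kd_self hα1.ne t (m + 1) hΔ₂.ne', Kd_self hα1.ne t m hΔ₁.ne',
    Real.div_rpow hΔ₂.le hΔ₁.le, Real.rpow_neg hΔ₁.le, Real.rpow_neg hΔ₂.le]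
  have hpow₁ := Real.rpow_pos_of_pos hΔ₁ α
  have hpow₂ := Real.rpow_pos_of_pos hΔ₂ α
  field_simp

/-- Two-term recursion for the complementary kernels (equation (3.12)):
`P^{n,n-1}_α = P^{n,n}_α (1 - K^{n,n-1}_{1-α}/K^{n,n}_{1-α}) / μ_n^α`
with `μ_n = Δt_n/Δt_{n-1}`, for every `2 ≤ n ≤ N`. -/
theorem complementary_kernel_two_term_recursion
    (α T : ℝ) (N : ℕ) (t : ℕ → ℝ)
    (hα0 : 0 < α) (hα1 : α < 1) (hT : 0 < T)
    (ht0 : t 0 = 0) (htN : t N = T)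
    (hmono : ∀ j, j < N → t j < t (j + 1)) :
    ∀ n, 2 ≤ n → n ≤ N →
      Pd α t n (n - 1)
        = Pd α t n n * (1 - Kd α t n (n - 1) / Kd α t n n) /
            ((t n - t (n - 1)) / (t (n - 1) - t (n - 2))) ^ α :=
  complementary_kernel_two_term_recursion_general α N t hα1 hmono
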